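/- arXiv:1812.00377 — 2 statements merged into one kernel-verified Lean document; each statement's English description precedes it below -/
import Mathlib

section
/- Let (X, 𝔅, μ) be a probability space and (T^t)_{t∈ℝ} a measure-preserving flow on X. Let f ∈ L²(X, μ) with ∫ f dμ = 0. If f ∘ T^t does not converge to 0 in the weak L² topology as t → ∞, then there exist a sequence t_n → ∞ and a function ψ ∈ L²(X, μ) which is not μ-almost everywhere constant, such that f ∘ T^{t_n} → ψ and f ∘ T^{-t_n} → ψ in the weak L² topology. -/
/-!
The Koopman operators `U t` of the flow form a group of linear isometries of `L²(μ)`, and the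
hypothesis says that `U t f` does not tend weakly to `0`. Bounded sequences in the closed span of
a countable set are weakly sequentially compact (sequential Banach–Alaoglu in that separable
subspace, then orthogonal projection), so `U (c n) f ⇀ P ≠ 0` for some `c n → ∞`.

For a difference `s = c n - c m`, `⟪U s f, U δ f⟫ = ⟪U (c n) f, U (c m + δ) f⟫` tends, first as
`n → ∞` and then as `m → ∞`, to `⟪U (-δ) P, P⟫`, which is even in `δ`. A diagonal sequence of
such differences `s j → ∞`, thinned out once more, gives `U (s j) f ⇀ Ψ`; since `U (-s) f` pairs
with `U δ f` as `U s f` pairs with `U (-δ) f`, evenness gives `U (-s j) f ⇀ Ψ` too. Finally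
`⟪Ψ, f⟫ = ‖P‖² > 0`, while a constant `Ψ` is orthogonal to the mean-zero `f`.
-/

open MeasureTheory Filter Topology
open scoped RealInnerProductSpace

namespace Filter

variable {α β γ : Type*}

theorem Tendsto.exists_seq_comp_tendsto {l : Filter α} [l.NeBot] {g : Filter β}
    [g.IsCountablyGenerated] {u : α → β} (h : Tendsto u l g) :
    ∃ x : ℕ → α, Tendsto (u ∘ x) atTop g := by
  obtain ⟨B, hB⟩ := g.exists_antitone_basis
  choose x hx using fun k => (h.eventually_mem (hB.mem k)).exists
  exact ⟨x, hB.tendsto hx⟩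

instance curry_neBot {la : Filter α} {lb : Filter β} [la.NeBot] [lb.NeBot] :
    (la.curry lb).NeBot :=
  ⟨fun h => by
    have : ∀ᶠ _ : α × β in la.curry lb, False := h ▸ eventually_bot
    exact (eventually_curry_iff.1 this).exists.elim fun _ hb => hb.exists.elim fun _ h => h⟩

theorem tendsto_curry_of_tendsto_of_tendsto [TopologicalSpace γ] {la : Filter α}
    {lb : Filter β} {f : α → β → γ} {g : α → γ} {c : γ}
    (hf : ∀ a, Tendsto (f a) lb (𝓝 (g a))) (hg : Tendsto g la (𝓝 c)) :
    Tendsto ↿f (la.curry lb) (𝓝 c) := by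
  intro s hs
  obtain ⟨V, hVs, hVo, hcV⟩ := mem_nhds_iff.1 hs
  exact (hg.eventually_mem (hVo.mem_nhds hcV)).mono fun a ha =>
    ((hf a).eventually_mem (hVo.mem_nhds ha)).mono fun b hb => hVs hb

end Filter

open Filter

section Hilbert

variable {E : Type*} [NormedAddCommGroup E] [InnerProductSpace ℝ E]

theorem tendsto_inner_of_tendsto_inner_of_mem {ι : Type*} {l : Filter ι} (K : Submodule ℝ E)
    [K.HasOrthogonalProjection] {x : ι → E} {ψ : E} (hx : ∀ i, x i ∈ K) (hψ : ψ ∈ K)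
    (h : ∀ y ∈ K, Tendsto (fun i => ⟪x i, y⟫) l (𝓝 ⟪ψ, y⟫)) (y : E) :
    Tendsto (fun i => ⟪x i, y⟫) l (𝓝 ⟪ψ, y⟫) := by
  have key : ∀ v ∈ K, ⟪v, y⟫ = ⟪v, K.starProjection y⟫ := fun v hv => by
    rw [← K.inner_starProjection_left_eq_right, K.starProjection_eq_self_iff.2 hv]
  simpa only [key _ (hx _), key ψ hψ] using h _ (K.starProjection_apply_mem y)

theorem tendsto_inner_of_mem_span {ι : Type*} {l : Filter ι} {S : Set E}
    {x : ι → E} {ψ : E} (h : ∀ z ∈ S, Tendsto (fun i => ⟪x i, z⟫) l (𝓝 ⟪ψ, z⟫))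
    {z : E} (hz : z ∈ Submodule.span ℝ S) :
    Tendsto (fun i => ⟪x i, z⟫) l (𝓝 ⟪ψ, z⟫) := by
  induction hz using Submodule.span_induction with
  | mem z hz => exact h z hz
  | zero => simpa using tendsto_const_nhds
  | add u v _ _ hu hv => simpa only [inner_add_right] using hu.add hv
  | smul c u _ hu => simpa only [real_inner_smul_right] using hu.const_mul c

variable [CompleteSpace E]

theorem tendsto_inner_of_tendsto_inner_on_generators {ι : Type*} {l : Filter ι} {S : Set E}
    {x : ι → E} {ψ : E} {R : ℝ} (hR : ∀ i, ‖x i‖ ≤ R)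
    (hx : ∀ i, x i ∈ (Submodule.span ℝ S).topologicalClosure)
    (hψ : ψ ∈ (Submodule.span ℝ S).topologicalClosure)
    (h : ∀ z ∈ S, Tendsto (fun i => ⟪x i, z⟫) l (𝓝 ⟪ψ, z⟫)) (y : E) :
    Tendsto (fun i => ⟪x i, y⟫) l (𝓝 ⟪ψ, y⟫) := by
  refine tendsto_inner_of_tendsto_inner_of_mem _ hx hψ (fun y hy => ?_) y
  have hbdd : ∃ C, ∀ i, ‖innerSL ℝ (x i)‖ ≤ C :=
    ⟨R, fun i => by simpa only [innerSL_apply_norm] using hR i⟩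
  have hequi : Equicontinuous fun i => (innerSL ℝ (x i) : E → ℝ) :=
    ((NormedSpace.equicontinuous_TFAE fun i => innerSL ℝ (x i)).out 5 1).1 hbdd
  have hclosed := hequi.isClosed_setOfPred_tendsto (l := l)
    (continuous_const.inner continuous_id : Continuous fun z : E => ⟪ψ, z⟫)
  exact closure_minimal (fun z hz => tendsto_inner_of_mem_span h hz) hclosed hy

theorem exists_subseq_tendsto_inner {S : Set E} (hS : S.Countable) {x : ℕ → E} {R : ℝ}
    (hR : ∀ n, ‖x n‖ ≤ R) (hx : ∀ n, x n ∈ (Submodule.span ℝ S).topologicalClosure) :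
    ∃ φ : ℕ → ℕ, StrictMono φ ∧ ∃ ψ ∈ (Submodule.span ℝ S).topologicalClosure,
      ∀ y, Tendsto (fun n => ⟪x (φ n), y⟫) atTop (𝓝 ⟪ψ, y⟫) := by
  set K := (Submodule.span ℝ S).topologicalClosure
  have : TopologicalSpace.SeparableSpace K :=
    hS.isSeparable.span.closure.separableSpace
  let a : ℕ → WeakDual ℝ K := fun n =>
    StrongDual.toWeakDual (InnerProductSpace.toDual ℝ K ⟨x n, hx n⟩)
  obtain ⟨b, -, φ, hφ, hb⟩ := WeakDual.isSeqCompact_closedBall ℝ K 0 R (x := a) fun n => by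
    simpa [a] using hR n
  set ψ : K := (InnerProductSpace.toDual ℝ K).symm (WeakDual.toStrongDual b)
  refine ⟨φ, hφ, ψ, ψ.2,
    tendsto_inner_of_tendsto_inner_of_mem K (fun n => hx _) ψ.2 fun y hy => ?_⟩
  rw [show ⟪(ψ : E), y⟫ = b ⟨y, hy⟩ from InnerProductSpace.toDual_symm_apply (x := (⟨y, hy⟩ : K))]
  exact ((WeakDual.eval_continuous (⟨y, hy⟩ : K)).tendsto b).comp hb

theorem exists_tendsto_atTop_tendsto_inner_ne_zero {x : ℝ → E} {R : ℝ} (hR : ∀ t, ‖x t‖ ≤ R)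
    (hx : ¬ ∀ y, Tendsto (fun t => ⟪x t, y⟫) atTop (𝓝 0)) :
    ∃ c : ℕ → ℝ, Tendsto c atTop atTop ∧ ∃ P ≠ 0,
      ∀ y, Tendsto (fun n => ⟪x (c n), y⟫) atTop (𝓝 ⟪P, y⟫) := by
  obtain ⟨y, hy⟩ := not_forall.1 hx
  obtain ⟨s, hs, hfreq⟩ := not_tendsto_iff_exists_frequently_notMem.1 hy
  choose t ht hts using frequently_atTop.1 hfreq
  have ht_top : Tendsto (fun n : ℕ => t n) atTop atTop :=
    tendsto_atTop_mono (fun n => ht n) tendsto_natCast_atTop_atTop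
  obtain ⟨φ, hφ, P, -, hP⟩ :=
    exists_subseq_tendsto_inner (Set.countable_range fun n : ℕ => x (t n)) (fun n => hR (t n))
      fun n => Submodule.le_topologicalClosure _ (Submodule.subset_span ⟨n, rfl⟩)
  refine ⟨fun n => t (φ n), ht_top.comp hφ.tendsto_atTop, P, ?_, hP⟩
  rintro rfl
  obtain ⟨n, hn⟩ := ((hP y).eventually_mem (by simpa using hs)).exists
  exact hts _ hn

end Hilbert

section IsometricFlow

variable {E : Type*} [NormedAddCommGroup E] [InnerProductSpace ℝ E]

def IsIsometricFlow (U : ℝ → E →ₗᵢ[ℝ] E) : Prop :=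
  ∀ s t x, U (s + t) x = U s (U t x)

namespace IsIsometricFlow

variable {U : ℝ → E →ₗᵢ[ℝ] E}

theorem apply_zero (hU : IsIsometricFlow U) (x : E) : U 0 x = x :=
  (U 0).injective (by rw [← hU, add_zero])

theorem inner_add_apply_add_apply (hU : IsIsometricFlow U) (a b c : ℝ) (x y : E) :
    ⟪U (a + b) x, U (a + c) y⟫ = ⟪U b x, U c y⟫ := by
  rw [hU, hU, LinearIsometry.inner_map_map]

theorem inner_neg_apply (hU : IsIsometricFlow U) (a b : ℝ) (x : E) :
    ⟪U (-a) x, U b x⟫ = ⟪U a x, U (-b) x⟫ := by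
  have h := hU.inner_add_apply_add_apply (b - a) a (-b) x x
  rwa [sub_add_cancel, show b - a + -b = -a by ring, real_inner_comm] at h

theorem tendsto_curry_inner_sub (hU : IsIsometricFlow U) {F P : E} {c : ℕ → ℝ}
    (hP : ∀ y, Tendsto (fun n => ⟪U (c n) F, y⟫) atTop (𝓝 ⟪P, y⟫)) (δ : ℝ) :
    Tendsto (↿fun m n => ⟪U (c n - c m) F, U δ F⟫) (atTop.curry atTop)
      (𝓝 ⟪U (-δ) P, P⟫) := by
  refine tendsto_curry_of_tendsto_of_tendsto (fun m => ?_)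
    (by simpa only [real_inner_comm (U (-δ) P)] using hP (U (-δ) P))
  have hshift : ∀ n, ⟪U (c n - c m) F, U δ F⟫ = ⟪U (c n) F, U (c m + δ) F⟫ := fun n => by
    rw [← hU.inner_add_apply_add_apply (c m), add_sub_cancel]
  have hlim : ⟪P, U (c m + δ) F⟫ = ⟪U (-δ) P, U (c m) F⟫ := by
    rw [← hU.inner_add_apply_add_apply δ, add_neg_cancel, hU.apply_zero, add_comm]
  simpa only [hshift, hlim] using hP (U (c m + δ) F)

theorem exists_seq_tendsto_inner_sub (hU : IsIsometricFlow U) {F P : E} {c : ℕ → ℝ}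
    (hc : Tendsto c atTop atTop)
    (hP : ∀ y, Tendsto (fun n => ⟪U (c n) F, y⟫) atTop (𝓝 ⟪P, y⟫))
    {ι : Type*} [Countable ι] (δ : ι → ℝ) :
    ∃ q : ℕ → ℕ × ℕ, Tendsto (fun j => c (q j).2 - c (q j).1) atTop atTop ∧
      ∀ i, Tendsto (fun j => ⟪U (c (q j).2 - c (q j).1) F, U (δ i) F⟫) atTop
        (𝓝 ⟪U (-δ i) P, P⟫) := by
  have hgap : Tendsto (↿fun m n => c n - c m) (atTop.curry atTop) atTop :=
    Tendsto.curry (Eventually.of_forall fun m => tendsto_atTop_add_const_right _ _ hc)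
  have hcorr := tendsto_pi_nhds.2 fun i => hU.tendsto_curry_inner_sub hP (δ i)
  obtain ⟨q, hq⟩ := (hgap.prodMk hcorr).exists_seq_comp_tendsto
  exact ⟨q, (tendsto_prod_iff'.1 hq).1, tendsto_pi_nhds.1 (tendsto_prod_iff'.1 hq).2⟩

variable [CompleteSpace E]

theorem exists_tendsto_inner_apply_and_apply_neg (hU : IsIsometricFlow U) {F P : E}
    {c : ℕ → ℝ} (hc : Tendsto c atTop atTop)
    (hP : ∀ y, Tendsto (fun n => ⟪U (c n) F, y⟫) atTop (𝓝 ⟪P, y⟫)) :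
    ∃ s : ℕ → ℝ, ∃ Ψ : E, Tendsto s atTop atTop ∧ ⟪Ψ, F⟫ = ‖P‖ ^ 2 ∧
      (∀ y, Tendsto (fun n => ⟪U (s n) F, y⟫) atTop (𝓝 ⟪Ψ, y⟫)) ∧
      ∀ y, Tendsto (fun n => ⟪U (-s n) F, y⟫) atTop (𝓝 ⟪Ψ, y⟫) := by
  set S := Set.range fun i : ℕ × ℕ => U (c i.1 - c i.2) F
  have hS : ∀ a b, U (c a - c b) F ∈ (Submodule.span ℝ S).topologicalClosure := fun a b =>
    Submodule.le_topologicalClosure _ (Submodule.subset_span ⟨(a, b), rfl⟩)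
  obtain ⟨q, hq_top, hq⟩ := hU.exists_seq_tendsto_inner_sub hc hP fun i : ℕ × ℕ => c i.1 - c i.2
  obtain ⟨ρ, hρ, Ψ, hΨS, hΨ⟩ := exists_subseq_tendsto_inner (Set.countable_range _)
    (fun j => (LinearIsometry.norm_map _ _).le) fun j => hS (q j).2 (q j).1
  have hΨgen : ∀ a b, ⟪Ψ, U (c a - c b) F⟫ = ⟪U (-(c a - c b)) P, P⟫ := fun a b =>
    tendsto_nhds_unique (hΨ _) ((hq (a, b)).comp hρ.tendsto_atTop)
  refine ⟨fun j => c (q (ρ j)).2 - c (q (ρ j)).1, Ψ, hq_top.comp hρ.tendsto_atTop, ?_, hΨ, ?_⟩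
  · simpa [hU.apply_zero, real_inner_self_eq_norm_sq] using hΨgen 0 0
  · refine tendsto_inner_of_tendsto_inner_on_generators
      (fun j => (LinearIsometry.norm_map _ _).le) (fun j => by rw [neg_sub]; exact hS _ _) hΨS ?_
    rintro _ ⟨⟨a, b⟩, rfl⟩
    have hsymm := hU.inner_neg_apply (c a - c b) 0 P
    simp only [hU.apply_zero, neg_zero] at hsymm
    rw [hΨgen, hsymm]
    have hlim := (hq (b, a)).comp hρ.tendsto_atTop
    rw [neg_sub] at hlim
    refine hlim.congr fun j => ?_
    rw [Function.comp_apply, hU.inner_neg_apply, neg_sub]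

end IsIsometricFlow

end IsometricFlow

section Koopman

variable {X : Type*} [MeasurableSpace X] {μ : Measure X} {T : ℝ → X → X}

noncomputable def koopman (hpres : ∀ t, MeasurePreserving (T t) μ μ) (t : ℝ) :
    Lp ℝ 2 μ →ₗᵢ[ℝ] Lp ℝ 2 μ :=
  Lp.compMeasurePreservingₗᵢ ℝ (T t) (hpres t)

theorem isIsometricFlow_koopman (hTadd : ∀ s t, T (s + t) = T s ∘ T t)
    (hpres : ∀ t, MeasurePreserving (T t) μ μ) : IsIsometricFlow (koopman hpres) := by
  intro s t u
  have hcomp : T (s + t) = T t ∘ T s := by rw [add_comm, hTadd]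
  change Lp.compMeasurePreserving (T (s + t)) (hpres _) u =
    Lp.compMeasurePreserving (T s) (hpres s) (Lp.compMeasurePreserving (T t) (hpres t) u)
  rw [← Lp.compMeasurePreserving_comp_apply]
  simp only [hcomp]

theorem MeasureTheory.L2.inner_toLp_eq_integral (u : Lp ℝ 2 μ) {g : X → ℝ} (hg : MemLp g 2 μ) :
    ⟪u, hg.toLp g⟫ = ∫ x, u x * g x ∂μ := by
  rw [L2.inner_def]
  refine integral_congr_ae ?_
  filter_upwards [hg.coeFn_toLp] with x hx
  rw [hx, Real.inner_apply]

theorem inner_koopman_toLp (hpres : ∀ t, MeasurePreserving (T t) μ μ) {f g : X → ℝ}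
    (hf : MemLp f 2 μ) (hg : MemLp g 2 μ) (t : ℝ) :
    ⟪koopman hpres t (hf.toLp f), hg.toLp g⟫ = ∫ x, f (T t x) * g x ∂μ := by
  change ⟪Lp.compMeasurePreserving (T t) (hpres t) (hf.toLp f), hg.toLp g⟫ = _
  rw [Lp.toLp_compMeasurePreserving, L2.inner_toLp_eq_integral]
  refine integral_congr_ae ?_
  filter_upwards [(hf.comp_measurePreserving (hpres t)).coeFn_toLp] with x hx
  rw [hx, Function.comp_apply]

end Koopman

theorem stmt_0_general {X : Type*} [MeasurableSpace X] (μ : Measure X) [IsProbabilityMeasure μ]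
    (T : ℝ → X → X)
    (hTadd : ∀ s t, T (s + t) = T s ∘ T t)
    (hpres : ∀ t, MeasurePreserving (T t) μ μ)
    (f : X → ℝ) (hf : MemLp f 2 μ) (hfint : ∫ x, f x ∂μ = 0)
    (hnot : ¬ ∀ g : X → ℝ, MemLp g 2 μ →
      Tendsto (fun t : ℝ => ∫ x, f (T t x) * g x ∂μ) atTop (𝓝 0)) :
    ∃ (tseq : ℕ → ℝ) (ψ : X → ℝ),
      Tendsto tseq atTop atTop ∧ MemLp ψ 2 μ ∧
      (¬ ∃ c : ℝ, ∀ᵐ x ∂μ, ψ x = c) ∧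
      (∀ g : X → ℝ, MemLp g 2 μ →
        Tendsto (fun n => ∫ x, f (T (tseq n) x) * g x ∂μ) atTop (𝓝 (∫ x, ψ x * g x ∂μ))) ∧
      (∀ g : X → ℝ, MemLp g 2 μ →
        Tendsto (fun n => ∫ x, f (T (-(tseq n)) x) * g x ∂μ) atTop (𝓝 (∫ x, ψ x * g x ∂μ))) := by
  have hU := isIsometricFlow_koopman hTadd hpres
  have hweak : ¬ ∀ y, Tendsto (fun t => ⟪koopman hpres t (hf.toLp f), y⟫) atTop (𝓝 0) :=
    fun h => hnot fun g hg => by simpa only [inner_koopman_toLp] using h (hg.toLp g)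
  obtain ⟨c, hc, P, hP0, hP⟩ :=
    exists_tendsto_atTop_tendsto_inner_ne_zero (fun t => (LinearIsometry.norm_map _ _).le) hweak
  obtain ⟨s, Ψ, hs, hΨF, hfwd, hbwd⟩ := hU.exists_tendsto_inner_apply_and_apply_neg hc hP
  refine ⟨s, Ψ, hs, Lp.memLp Ψ, ?_, fun g hg => ?_, fun g hg => ?_⟩
  · rintro ⟨a, ha⟩
    have hzero : ⟪Ψ, hf.toLp f⟫ = 0 := by
      rw [L2.inner_toLp_eq_integral, integral_congr_ae (ha.mono fun x hx => by rw [hx]),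
        integral_const_mul, hfint, mul_zero]
    rw [hzero] at hΨF
    exact hP0 (by simpa using hΨF.symm)
  · rw [← L2.inner_toLp_eq_integral _ hg]
    simpa only [inner_koopman_toLp] using hfwd (hg.toLp g)
  · rw [← L2.inner_toLp_eq_integral _ hg]
    simpa only [inner_koopman_toLp] using hbwd (hg.toLp g)

theorem stmt_0 {X : Type*} [MeasurableSpace X] (μ : Measure X) [IsProbabilityMeasure μ]
    (T : ℝ → X → X) (hmeas : ∀ t, Measurable (T t)) (hT0 : T 0 = id)
    (hTadd : ∀ s t, T (s + t) = T s ∘ T t)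
    (hpres : ∀ t, MeasurePreserving (T t) μ μ)
    (f : X → ℝ) (hf : MemLp f 2 μ) (hfint : ∫ x, f x ∂μ = 0)
    (hnot : ¬ ∀ g : X → ℝ, MemLp g 2 μ →
      Tendsto (fun t : ℝ => ∫ x, f (T t x) * g x ∂μ) atTop (𝓝 0)) :
    ∃ (tseq : ℕ → ℝ) (ψ : X → ℝ),
      Tendsto tseq atTop atTop ∧ MemLp ψ 2 μ ∧
      (¬ ∃ c : ℝ, ∀ᵐ x ∂μ, ψ x = c) ∧
      (∀ g : X → ℝ, MemLp g 2 μ →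
        Tendsto (fun n => ∫ x, f (T (tseq n) x) * g x ∂μ) atTop (𝓝 (∫ x, ψ x * g x ∂μ))) ∧
      (∀ g : X → ℝ, MemLp g 2 μ →
        Tendsto (fun n => ∫ x, f (T (-(tseq n)) x) * g x ∂μ) atTop (𝓝 (∫ x, ψ x * g x ∂μ))) :=
  stmt_0_general μ T hTadd hpres f hf hfint hnot
end

section
/- Let H be a Hilbert space and (f_n) a sequence in H converging weakly to ψ ∈ H. Then there exists a subsequence (f_{n_j}) whose Cesàro averages (1/k) ∑_{j=1}^{k} f_{n_j} converge to ψ in norm as k → ∞. -/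
/-!
Subtracting the weak limit, we may assume `f n ⇀ 0`; the sequence is then bounded by the uniform
boundedness principle, say `‖f n‖ ≤ C`. Choose the indices greedily: once `n_0 < ⋯ < n_k` are
fixed, weak convergence lets us take `n_{k+1}` so large that `f n_{k+1}` is almost orthogonal to
`f 0, …, f n_k`, with `|⟪f p, f n_{k+1}⟫| ≤ 1 / (n_k + 1)`. As `n_k ≥ k`, the partial sums
`S_k = ∑_{j<k} f n_j` then satisfy `|⟪S_k, f n_k⟫| ≤ 1`, hence
`‖S_{k+1}‖² = ‖S_k‖² + 2⟪S_k, f n_k⟫ + ‖f n_k‖² ≤ ‖S_k‖² + 2 + C²`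
and `‖S_k / k‖² ≤ (C² + 2) / k → 0`.
-/

open Filter Topology
open scoped RealInnerProductSpace

section InnerProductSpace

variable {E : Type*} [NormedAddCommGroup E] [InnerProductSpace ℝ E]

theorem exists_norm_le_of_tendsto_inner [CompleteSpace E] {g : ℕ → E}
    (hg : ∀ h : E, ∃ a, Tendsto (fun n => ⟪g n, h⟫) atTop (𝓝 a)) :
    ∃ C, ∀ n, ‖g n‖ ≤ C := by
  obtain ⟨C, hC⟩ := banach_steinhaus (g := fun n => innerSL ℝ (g n)) fun h => by
    obtain ⟨a, ha⟩ := hg h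
    obtain ⟨C, hC⟩ := (Metric.isBounded_range_of_tendsto _ ha).subset_closedBall 0
    exact ⟨C, fun n => by simpa using hC ⟨n, rfl⟩⟩
  exact ⟨C, fun n => innerSL_apply_norm ℝ (g n) ▸ hC n⟩

theorem exists_gt_forall_abs_inner_le {g : ℕ → E}
    (hg : ∀ h : E, Tendsto (fun n => ⟪g n, h⟫) atTop (𝓝 0)) (N : ℕ) {ε : ℝ} (hε : 0 < ε) :
    ∃ m, N < m ∧ ∀ p ≤ N, |⟪g p, g m⟫| ≤ ε := by
  have hsmall : ∀ᶠ m in atTop, ∀ p ∈ Finset.range (N + 1), |⟪g p, g m⟫| ≤ ε := by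
    refine (eventually_all_finset _).2 fun p _ => ?_
    filter_upwards [(hg (g p)).abs.eventually (ge_mem_nhds (a := ε) (by simpa using hε))]
      with m hm
    rwa [real_inner_comm]
  obtain ⟨m, hm, hNm⟩ := (hsmall.and (eventually_gt_atTop N)).exists
  exact ⟨m, hNm, fun p hp => hm p (Finset.mem_range_succ_iff.2 hp)⟩

theorem exists_strictMono_abs_inner_sum_le_one {g : ℕ → E}
    (hg : ∀ h : E, Tendsto (fun n => ⟪g n, h⟫) atTop (𝓝 0)) :
    ∃ φ : ℕ → ℕ, StrictMono φ ∧
      ∀ k, |⟪∑ i ∈ Finset.range k, g (φ i), g (φ k)⟫| ≤ 1 := by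
  choose F hF_gt hF_small using fun N : ℕ =>
    exists_gt_forall_abs_inner_le hg N (ε := ((N : ℝ) + 1)⁻¹) (by positivity)
  have hφ_succ : ∀ k, F^[k + 1] 0 = F (F^[k] 0) := fun k => Function.iterate_succ_apply' F k 0
  have hφ : StrictMono fun k => F^[k] 0 :=
    strictMono_nat_of_lt_succ fun k => hφ_succ k ▸ hF_gt _
  refine ⟨fun k => F^[k] 0, hφ, ?_⟩
  rintro (_ | k)
  · simp
  rw [sum_inner]
  calc |∑ i ∈ Finset.range (k + 1), ⟪g (F^[i] 0), g (F^[k + 1] 0)⟫|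
      ≤ ∑ i ∈ Finset.range (k + 1), |⟪g (F^[i] 0), g (F^[k + 1] 0)⟫| :=
        Finset.abs_sum_le_sum_abs _ _
    _ ≤ ∑ _i ∈ Finset.range (k + 1), ((F^[k] 0 : ℝ) + 1)⁻¹ :=
        Finset.sum_le_sum fun i hi => hφ_succ k ▸
          hF_small _ _ (hφ.monotone (Finset.mem_range_succ_iff.1 hi))
    _ = (k + 1) / ((F^[k] 0 : ℝ) + 1) := by simp [div_eq_mul_inv]
    _ ≤ 1 := by
        rw [div_le_one (Nat.cast_add_one_pos _)]
        exact_mod_cast Nat.succ_le_succ (hφ.id_le k)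

theorem norm_sum_range_sq_le {x : ℕ → E} {A B : ℝ} (hx : ∀ k, ‖x k‖ ^ 2 ≤ A)
    (hS : ∀ k, 2 * ⟪∑ i ∈ Finset.range k, x i, x k⟫ ≤ B) (k : ℕ) :
    ‖∑ i ∈ Finset.range k, x i‖ ^ 2 ≤ k * (A + B) := by
  induction k with
  | zero => simp
  | succ k ih =>
    rw [Finset.sum_range_succ, norm_add_sq_real]
    push_cast
    linarith [hx k, hS k]

end InnerProductSpace

theorem tendsto_inv_smul_of_norm_sq_le {E : Type*} [SeminormedAddCommGroup E] [NormedSpace ℝ E]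
    {S : ℕ → E} {M : ℝ} (hS : ∀ k, ‖S k‖ ^ 2 ≤ k * M) :
    Tendsto (fun k : ℕ => (k : ℝ)⁻¹ • S k) atTop (𝓝 0) := by
  rw [tendsto_zero_iff_norm_tendsto_zero]
  have hlim : Tendsto (fun k : ℕ => √(M / k)) atTop (𝓝 0) :=
    Real.sqrt_zero ▸
      (Real.continuous_sqrt.tendsto 0).comp (tendsto_const_div_atTop_nhds_zero_nat M)
  refine squeeze_zero (fun _ => norm_nonneg _) (fun k => ?_) hlim
  rcases k.eq_zero_or_pos with rfl | hk
  · simp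
  have hk_pos : (0 : ℝ) < k := Nat.cast_pos.2 hk
  rw [norm_smul, norm_inv, Real.norm_natCast]
  refine Real.le_sqrt_of_sq_le ?_
  calc ((k : ℝ)⁻¹ * ‖S k‖) ^ 2 = ‖S k‖ ^ 2 / k ^ 2 := by field_simp
    _ ≤ k * M / k ^ 2 := by gcongr; exact hS k
    _ = M / k := by field_simp

theorem stmt_9 {H : Type*} [NormedAddCommGroup H] [InnerProductSpace ℝ H] [CompleteSpace H]
    (f : ℕ → H) (ψ : H)
    (hweak : ∀ h : H, Tendsto (fun n => (inner ℝ (f n) h : ℝ)) atTop (𝓝 (inner ℝ ψ h))) :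
    ∃ φ : ℕ → ℕ, StrictMono φ ∧
      Tendsto (fun k : ℕ => ((k : ℝ))⁻¹ • ∑ j ∈ Finset.range k, f (φ j)) atTop (𝓝 ψ) := by
  set g : ℕ → H := fun n => f n - ψ
  have hg : ∀ h : H, Tendsto (fun n => ⟪g n, h⟫) atTop (𝓝 0) := fun h => by
    simpa [g, inner_sub_left] using (hweak h).sub_const ⟪ψ, h⟫
  obtain ⟨C, hC⟩ := exists_norm_le_of_tendsto_inner fun h => ⟨0, hg h⟩
  obtain ⟨φ, hφ, horth⟩ := exists_strictMono_abs_inner_sum_le_one hg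
  have hS := norm_sum_range_sq_le (x := fun k => g (φ k)) (A := C ^ 2) (B := 2)
    (fun k => pow_le_pow_left₀ (norm_nonneg _) (hC _) 2)
    (fun k => by linarith [(abs_le.1 (horth k)).2])
  refine ⟨φ, hφ, ?_⟩
  have hcesaro : ∀ᶠ k : ℕ in atTop, ψ + (k : ℝ)⁻¹ • ∑ j ∈ Finset.range k, g (φ j) =
      (k : ℝ)⁻¹ • ∑ j ∈ Finset.range k, f (φ j) := by
    filter_upwards [eventually_ne_atTop 0] with k hk
    simp only [g, Finset.sum_sub_distrib, Finset.sum_const, Finset.card_range, smul_sub,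
      ← Nat.cast_smul_eq_nsmul ℝ, inv_smul_smul₀ (Nat.cast_ne_zero.2 hk : (k : ℝ) ≠ 0)]
    abel
  simpa using (tendsto_const_nhds.add (tendsto_inv_smul_of_norm_sq_le hS)).congr' hcesaro
end
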